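/- Suppose (w*, b*, d*) minimizes the S³VM objective J, and for i ∈ I_u write ξ*_i = max(0, 1 − d* i * (⟪w*, x i⟫ + b*)). Then: (a) for every i ∈ I_u with ξ*_i > 0 one has d* i * (⟪w*, x i⟫ + b*) ≥ 0; (b) for every i ∈ I_u with ξ*_i = 0 such that exactly one of the two choices d ∈ {−1, 1} satisfies max(0, 1 − d * (⟪w*, x i⟫ + b*)) = 0, one has d* i = 1 when ⟪w*, x i⟫ + b* ≥ 0 and d* i = −1 when ⟪w*, x i⟫ + b* < 0. -/
import Mathlib


open Finset
open scoped RealInnerProductSpace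

noncomputable section

/-- The semi-supervised SVM (S³VM) objective: labeled entries in `Il` use the
given labels `y`, unlabeled entries (in `Ilᶜ`) use the decision labels `d`. -/
def s3J {n m : ℕ} (x : Fin n → EuclideanSpace ℝ (Fin m)) (y : Fin n → ℝ)
    (Il : Finset (Fin n)) (Ml Mu : ℝ)
    (w : EuclideanSpace ℝ (Fin m)) (b : ℝ) (d : Fin n → ℝ) : ℝ :=
  (1 / 2) * ‖w‖ ^ 2
    + Ml * ∑ i ∈ Il, max 0 (1 - y i * (⟪w, x i⟫ + b))
    + Mu * ∑ i ∈ Ilᶜ, max 0 (1 - d i * (⟪w, x i⟫ + b))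

/-- Properties of optimal label assignments of unlabeled entries for S³VM:
(a) if an unlabeled entry has positive slack then its optimal label agrees in
sign with the value of the classifier; (b) if it has zero slack and exactly one
of the two labels attains zero hinge loss, the optimal label is the sign of
the classifier value. -/
theorem s3vm_optimal_label_property (n m : ℕ)
    (x : Fin n → EuclideanSpace ℝ (Fin m)) (y : Fin n → ℝ)
    (Il : Finset (Fin n)) (hy : ∀ i ∈ Il, y i = 1 ∨ y i = -1)
    (Ml Mu : ℝ) (hMl : 0 < Ml) (hMu : 0 < Mu)
    (wstar : EuclideanSpace ℝ (Fin m)) (bstar : ℝ) (dstar : Fin n → ℝ)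
    (hdstar : ∀ i ∈ Ilᶜ, dstar i = 1 ∨ dstar i = -1)
    (hmin : ∀ (w : EuclideanSpace ℝ (Fin m)) (b : ℝ) (d : Fin n → ℝ),
      (∀ i ∈ Ilᶜ, d i = 1 ∨ d i = -1) →
      s3J x y Il Ml Mu wstar bstar dstar ≤ s3J x y Il Ml Mu w b d) :
    (∀ i ∈ Ilᶜ, 0 < max 0 (1 - dstar i * (⟪wstar, x i⟫ + bstar)) →
        0 ≤ dstar i * (⟪wstar, x i⟫ + bstar)) ∧
    (∀ i ∈ Ilᶜ, max 0 (1 - dstar i * (⟪wstar, x i⟫ + bstar)) = 0 →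
      Xor' (max 0 (1 - 1 * (⟪wstar, x i⟫ + bstar)) = 0)
           (max 0 (1 - (-1) * (⟪wstar, x i⟫ + bstar)) = 0) →
      (0 ≤ ⟪wstar, x i⟫ + bstar → dstar i = 1) ∧
      (⟪wstar, x i⟫ + bstar < 0 → dstar i = -1)) := by
  -- flip lemma: flipping the label at one unlabeled index cannot decrease the hinge loss
  have flip : ∀ i ∈ Ilᶜ,
      max 0 (1 - dstar i * (⟪wstar, x i⟫ + bstar)) ≤
      max 0 (1 + dstar i * (⟪wstar, x i⟫ + bstar)) := by
    intro i hi
    set d' : Fin n → ℝ := Function.update dstar i (-(dstar i)) with hd'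
    have hd'valid : ∀ j ∈ Ilᶜ, d' j = 1 ∨ d' j = -1 := by
      intro j hj
      by_cases hji : j = i
      · subst hji
        simp only [hd', Function.update_self]
        rcases hdstar j hj with h | h <;> simp [h]
      · simp only [hd', Function.update_of_ne hji]
        exact hdstar j hj
    have hle := hmin wstar bstar d' hd'valid
    unfold s3J at hle
    have hsum : ∑ j ∈ Ilᶜ, max 0 (1 - dstar j * (⟪wstar, x j⟫ + bstar)) ≤
        ∑ j ∈ Ilᶜ, max 0 (1 - d' j * (⟪wstar, x j⟫ + bstar)) :=
      le_of_mul_le_mul_left (by linarith) hMu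
    have h1 : ∑ j ∈ Ilᶜ, max 0 (1 - dstar j * (⟪wstar, x j⟫ + bstar)) =
        max 0 (1 - dstar i * (⟪wstar, x i⟫ + bstar)) +
        ∑ j ∈ Ilᶜ.erase i, max 0 (1 - dstar j * (⟪wstar, x j⟫ + bstar)) :=
      (Finset.add_sum_erase _ _ hi).symm
    have h2 : ∑ j ∈ Ilᶜ, max 0 (1 - d' j * (⟪wstar, x j⟫ + bstar)) =
        max 0 (1 + dstar i * (⟪wstar, x i⟫ + bstar)) +
        ∑ j ∈ Ilᶜ.erase i, max 0 (1 - dstar j * (⟪wstar, x j⟫ + bstar)) := by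
      rw [← Finset.add_sum_erase _ _ hi]
      congr 1
      · simp only [hd', Function.update_self]; ring_nf
      · apply Finset.sum_congr rfl
        intro j hj
        have : j ≠ i := Finset.ne_of_mem_erase hj
        simp [hd', Function.update_of_ne this]
    rw [h1, h2] at hsum
    linarith
  constructor
  · intro i hi hpos
    set t := ⟪wstar, x i⟫ + bstar
    by_contra h
    push_neg at h
    have h1 : max 0 (1 - dstar i * t) = 1 - dstar i * t := max_eq_right (by linarith)
    have h2 : max 0 (1 + dstar i * t) ≤ 1 := max_le (by norm_num) (by linarith)
    have := flip i hi
    rw [h1] at this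
    linarith
  · intro i hi hzero _
    set t := ⟪wstar, x i⟫ + bstar
    rcases hdstar i hi with h | h
    · rw [h, one_mul] at hzero
      have ht : 1 ≤ t := by
        by_contra ht
        push_neg at ht
        have : max 0 (1 - t) = 1 - t := max_eq_right (by linarith)
        linarith [hzero ▸ this]
      exact ⟨fun _ => h, fun hlt => absurd hlt (by linarith)⟩
    · rw [h] at hzero
      have ht : t ≤ -1 := by
        by_contra ht
        push_neg at ht
        have : max 0 (1 - (-1) * t) = 1 - (-1) * t := max_eq_right (by linarith)
        linarith [hzero ▸ this]
      exact ⟨fun hge => absurd hge (by linarith), fun _ => h⟩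

end
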